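/- Let N ≥ 3, r ≥ 2 be integers and let G_{N,r} be the spider web graph. For every integer k with 2 ≤ k ≤ N there exists a wedge partition S_1, ..., S_k of the vertex set of G_{N,r} into k parts such that max_{1 ≤ i ≤ k} Cut(S_i)/Volume(S_i) ≤ r/(⌊N/k⌋·(2r−1)), where ⌊N/k⌋ denotes integer division. Consequently the wedge Cheeger constant φ_{N,r}(k), the minimum of this maximum over all wedge partitions into k parts, satisfies φ_{N,r}(k) ≤ r/(⌊N/k⌋(2r−1)). -/

import Mathlib

/-- The spider web graph `G_{N,r}`: the simple graph on vertex set `ZMod N × Fin r` in which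
`(i,j)` and `(i',j')` are adjacent iff (`j = j'` and `i' = i ± 1 mod N`) or (`i = i'` and
`|j - j'| = 1`); realized as the box (Cartesian) product of the cycle graph on `ZMod N`
(the circulant graph with jump `1`) with the path graph on `Fin r`. -/
def spiderWeb (N r : ℕ) : SimpleGraph (ZMod N × Fin r) :=
  SimpleGraph.boxProd (SimpleGraph.circulantGraph {(1 : ZMod N)}) (SimpleGraph.pathGraph r)

/-- `cut G S`: the number of edges of `G` with exactly one endpoint in `S`, counted as the
number of ordered pairs `(u, v)` with `u ∈ S`, `v ∉ S` and `u ~ v` (each such edge is counted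
exactly once this way). -/
noncomputable def cut {V : Type*} (G : SimpleGraph V) (S : Set V) : ℕ :=
  Set.ncard {p : V × V | p.1 ∈ S ∧ p.2 ∉ S ∧ G.Adj p.1 p.2}

/-- `volume G S`: the sum of the degrees of the vertices in `S`, counted as the number of
ordered pairs `(u, v)` with `u ∈ S` and `u ~ v`. -/
noncomputable def volume {V : Type*} (G : SimpleGraph V) (S : Set V) : ℕ :=
  Set.ncard {p : V × V | p.1 ∈ S ∧ G.Adj p.1 p.2}

/-- `I ⊆ ZMod N` is an arc of cardinality `c`: `I = {a, a+1, ..., a+c-1}` (mod `N`). -/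
def IsArc (N : ℕ) (I : Set (ZMod N)) (c : ℕ) : Prop :=
  ∃ a : ZMod N, I = (fun t : ℕ => a + (t : ZMod N)) '' Set.Iio c

/-- A wedge partition of the vertex set of the spider web graph `G_{N,r}` into `k` parts:
the parts are `A 1 × Fin r, ..., A k × Fin r` where the `A i` are pairwise disjoint
nonempty arcs of `ZMod N` whose union is all of `ZMod N`. -/
def IsWedgePartition (N r k : ℕ) (S : Fin k → Set (ZMod N × Fin r)) : Prop :=
  ∃ A : Fin k → Set (ZMod N),
    (∀ i, ∃ c, 1 ≤ c ∧ IsArc N (A i) c) ∧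
    Pairwise (Function.onFun Disjoint A) ∧
    (⋃ i, A i) = Set.univ ∧
    ∀ i, S i = A i ×ˢ (Set.univ : Set (Fin r))

/-- `B ⊆ Fin r` is an interval: a set of consecutive integers `{a, a+1, ..., b}` with
`a ≤ b < r` (in particular, it is nonempty). -/
def IsInterval (r : ℕ) (B : Set (Fin r)) : Prop :=
  ∃ a b : ℕ, a ≤ b ∧ b < r ∧ B = {j : Fin r | a ≤ (j : ℕ) ∧ (j : ℕ) ≤ b}

/-- A ring partition of the vertex set of the spider web graph `G_{N,r}` into `k` parts:
the parts are `ZMod N × B 1, ..., ZMod N × B k` where the `B i` are pairwise disjoint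
nonempty intervals of `Fin r` whose union is all of `Fin r`. -/
def IsRingPartition (N r k : ℕ) (S : Fin k → Set (ZMod N × Fin r)) : Prop :=
  ∃ B : Fin k → Set (Fin r),
    (∀ i, IsInterval r (B i)) ∧
    Pairwise (Function.onFun Disjoint B) ∧
    (⋃ i, B i) = Set.univ ∧
    ∀ i, S i = (Set.univ : Set (ZMod N)) ×ˢ B i

/-- The wedge Cheeger constant `φ_{N,r}(k)`: the minimum over all wedge partitions
`S 1, ..., S k` of `G_{N,r}` of `max_i Cut(S i)/Volume(S i)`. -/
noncomputable def wedgeCheeger (N r k : ℕ) : ℝ :=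
  sInf {x : ℝ | ∃ S : Fin k → Set (ZMod N × Fin r), IsWedgePartition N r k S ∧
    x = ⨆ i, (cut (spiderWeb N r) (S i) : ℝ) / (volume (spiderWeb N r) (S i) : ℝ)}

/-- The ring Cheeger constant `ψ_{N,r}(k)`: the minimum over all ring partitions
`S 1, ..., S k` of `G_{N,r}` of `max_i Cut(S i)/Volume(S i)`. -/
noncomputable def ringCheeger (N r k : ℕ) : ℝ :=
  sInf {x : ℝ | ∃ S : Fin k → Set (ZMod N × Fin r), IsRingPartition N r k S ∧
    x = ⨆ i, (cut (spiderWeb N r) (S i) : ℝ) / (volume (spiderWeb N r) (S i) : ℝ)}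

/-! Cut the cycle at the points `⌊iN/k⌋`, `0 ≤ i ≤ k`, into `k` consecutive arcs, each of
length `c ≥ ⌊N/k⌋`. The only edges leaving the wedge over an arc are the `2r` horizontal edges
at its two ends, while each of its `cr` vertices has degree `2 + deg_path`, so its volume is
`c(2r + 2(r - 1)) = 2c(2r - 1)`. Every ratio is therefore at most `2r / (2⌊N/k⌋(2r - 1))`. -/

open Finset SimpleGraph
open scoped Classical

theorem volume_eq_sum_degree {V : Type*} [Fintype V] (G : SimpleGraph V) (S : Finset V) :
    volume G S = ∑ v ∈ S, G.degree v := by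
  have hset : {p : V × V | p.1 ∈ (S : Set V) ∧ G.Adj p.1 p.2} =
      ↑((S ×ˢ univ).filter fun p => G.Adj p.1 p.2) := by
    ext p; simp
  rw [volume, hset, Set.ncard_coe_finset, card_filter, sum_product]
  simp only [← card_neighborFinset_eq_degree, neighborFinset_eq_filter, card_filter]

theorem card_edgeFinset_pathGraph (n : ℕ) : #(pathGraph n).edgeFinset = n - 1 := by
  cases n with
  | zero => exact card_eq_zero.mpr (eq_empty_of_isEmpty _)
  | succ n =>
    have : (pathGraph (n + 1)).edgeFinset =
        univ.image fun i : Fin n => s(i.castSucc, i.succ) := by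
      ext e
      induction e using Sym2.ind with
      | _ u v =>
        simp only [mem_edgeFinset, mem_edgeSet, pathGraph_adj, mem_image, mem_univ, true_and,
          Sym2.eq_iff, Fin.ext_iff, Fin.val_castSucc, Fin.val_succ]
        constructor
        · rintro (h | h)
          · exact ⟨⟨u, by omega⟩, Or.inl ⟨rfl, h⟩⟩
          · exact ⟨⟨v, by omega⟩, Or.inr ⟨rfl, h⟩⟩
        · omega
    rw [this, card_image_of_injective, card_univ, Fintype.card_fin, Nat.add_sub_cancel]
    intro i j h
    simp only [Sym2.eq_iff, Fin.ext_iff, Fin.val_castSucc, Fin.val_succ] at h ⊢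
    omega

theorem sum_degree_pathGraph (n : ℕ) : ∑ j, (pathGraph n).degree j = 2 * (n - 1) := by
  rw [sum_degrees_eq_twice_card_edges, card_edgeFinset_pathGraph]

theorem degree_circulantGraph_one {N : ℕ} [NeZero N] (hN : 3 ≤ N) (x : ZMod N) :
    (circulantGraph {(1 : ZMod N)}).degree x = 2 := by
  have hne : ∀ n : ℕ, 0 < n → n < N → (n : ZMod N) ≠ 0 := fun n h0 hn h => by
    rw [ZMod.natCast_eq_zero_iff] at h; exact absurd (Nat.le_of_dvd h0 h) (by omega)
  have h1 := hne 1 one_pos (by omega)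
  have h2 := hne 2 two_pos (by omega)
  push_cast at h1 h2
  have : (circulantGraph {(1 : ZMod N)}).neighborFinset x = {x + 1, x - 1} := by
    ext y
    simp only [mem_neighborFinset, circulantGraph_adj, Set.mem_singleton_iff, mem_insert,
      mem_singleton]
    constructor
    · rintro ⟨-, h | h⟩
      · right; linear_combination -h
      · left; linear_combination h
    · rintro (rfl | rfl)
      · exact ⟨fun h => h1 (by linear_combination -h), Or.inr (by ring)⟩
      · exact ⟨fun h => h1 (by linear_combination h), Or.inl (by ring)⟩
  rw [← card_neighborFinset_eq_degree, this, card_pair]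
  intro h; exact h2 (by linear_combination h)

theorem degree_spiderWeb {N r : ℕ} [NeZero N] (hN : 3 ≤ N) (v : ZMod N × Fin r) :
    (spiderWeb N r).degree v = 2 + (pathGraph r).degree v.2 := by
  rw [spiderWeb, degree_boxProd, degree_circulantGraph_one hN]

theorem volume_spiderWeb_prod_univ {N r : ℕ} [NeZero N] (hN : 3 ≤ N) (A : Set (ZMod N)) :
    volume (spiderWeb N r) (A ×ˢ Set.univ) = A.ncard * (2 * r + 2 * (r - 1)) := by
  have hA : (A ×ˢ Set.univ : Set (ZMod N × Fin r)) =
      ↑(A.toFinset ×ˢ (univ : Finset (Fin r))) := by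
    simp
  rw [hA, volume_eq_sum_degree, sum_product, Set.ncard_eq_toFinset_card']
  simp only [degree_spiderWeb hN, sum_add_distrib, sum_degree_pathGraph, sum_const, card_univ,
    Fintype.card_fin, smul_eq_mul]
  ring

def arc {N : ℕ} (a : ZMod N) (c : ℕ) : Set (ZMod N) := (fun t : ℕ => a + t) '' Set.Iio c

theorem natCast_injOn_Iio (N : ℕ) : (Set.Iio N).InjOn (Nat.cast : ℕ → ZMod N) :=
  fun x hx y hy h => by
    rw [← ZMod.val_natCast_of_lt hx, h, ZMod.val_natCast_of_lt hy]

theorem ncard_arc {N c : ℕ} (a : ZMod N) (hc : c ≤ N) : (arc a c).ncard = c := by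
  rw [arc, Set.InjOn.ncard_image, Set.ncard_Iio_nat]
  intro x hx y hy h
  exact natCast_injOn_Iio N (lt_of_lt_of_le hx hc) (lt_of_lt_of_le hy hc) (add_left_cancel h)

theorem arc_natCast_eq_image_Ico (N : ℕ) {s e : ℕ} (h : s ≤ e) :
    arc (s : ZMod N) (e - s) = Nat.cast '' Set.Ico s e := by
  ext x
  constructor
  · rintro ⟨t, ht, rfl⟩
    exact ⟨s + t, ⟨by omega, by simp only [Set.mem_Iio] at ht; omega⟩, by push_cast; rfl⟩
  · rintro ⟨u, ⟨hsu, hue⟩, rfl⟩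
    exact ⟨u - s, by simp only [Set.mem_Iio]; omega, by
      simp only [← Nat.cast_add, Nat.add_sub_cancel' hsu]⟩

theorem cut_spiderWeb_arc_prod_univ_le {N r : ℕ} (a : ZMod N) (c : ℕ) :
    cut (spiderWeb N r) (arc a c ×ˢ Set.univ) ≤ 2 * r := by
  let leftEdge (j : Fin r) : (ZMod N × Fin r) × (ZMod N × Fin r) := ((a, j), (a - 1, j))
  let rightEdge (j : Fin r) : (ZMod N × Fin r) × (ZMod N × Fin r) :=
    ((a + (c - 1 : ℕ), j), (a + c, j))
  have hsub : {p : (ZMod N × Fin r) × (ZMod N × Fin r) | p.1 ∈ arc a c ×ˢ Set.univ ∧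
      p.2 ∉ arc a c ×ˢ Set.univ ∧ (spiderWeb N r).Adj p.1 p.2} ⊆
        ↑(univ.image leftEdge ∪ univ.image rightEdge) := by
    rintro ⟨⟨i, j⟩, ⟨i', j'⟩⟩ ⟨⟨⟨t, ht, rfl⟩, -⟩, hout, hadj⟩
    simp only [Set.mem_Iio] at ht
    have hin : ∀ s < c, (a + (s : ZMod N), j') ∈ arc a c ×ˢ Set.univ :=
      fun s hs => ⟨⟨s, hs, rfl⟩, trivial⟩
    simp only [spiderWeb, boxProd_adj, circulantGraph_adj, Set.mem_singleton_iff] at hadj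
    simp only [coe_union, coe_image, coe_univ, Set.image_univ, Set.mem_union, Set.mem_range,
      leftEdge, rightEdge, Prod.mk.injEq]
    rcases hadj with ⟨⟨-, h | h⟩, rfl⟩ | ⟨-, rfl⟩
    · obtain rfl : t = 0 := by
        by_contra ht0
        refine hout ?_
        convert hin (t - 1) (by omega) using 2
        rw [Nat.cast_sub (by omega)]
        linear_combination -h
      exact Or.inl ⟨j, ⟨by simp, rfl⟩, by linear_combination h, rfl⟩
    · obtain rfl : t = c - 1 := by
        by_contra htc
        refine hout ?_
        convert hin (t + 1) (by omega) using 2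
        push_cast
        linear_combination h
      refine Or.inr ⟨j, ⟨rfl, rfl⟩, ?_, rfl⟩
      rw [show c = c - 1 + 1 by omega]
      push_cast
      linear_combination -h
    · exact (hout (hin t ht)).elim
  calc cut (spiderWeb N r) (arc a c ×ˢ Set.univ)
      ≤ #(univ.image leftEdge ∪ univ.image rightEdge) := by
        rw [← Set.ncard_coe_finset]; exact Set.ncard_le_ncard hsub (finite_toSet _)
    _ ≤ #(univ.image leftEdge) + #(univ.image rightEdge) := card_union_le _ _
    _ ≤ r + r := by gcongr <;> exact card_image_le.trans (by simp)
    _ = 2 * r := by ring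

theorem pairwise_disjoint_natCast_image_Ico {N k : ℕ} {b : ℕ → ℕ} (hb : Monotone b)
    (hbk : b k = N) :
    Pairwise (Function.onFun Disjoint
      fun i : Fin k => (Nat.cast '' Set.Ico (b i) (b (i + 1)) : Set (ZMod N))) := by
  have hIio : ∀ i : Fin k, Set.Ico (b i) (b (i + 1)) ⊆ Set.Iio N := fun i _ hx =>
    lt_of_lt_of_le hx.2 (hbk ▸ hb (Nat.succ_le_of_lt i.isLt))
  intro i j hij
  exact (hb.pairwise_disjoint_on_Ico_succ (Fin.val_injective.ne hij)).image
    (natCast_injOn_Iio N) (hIio i) (hIio j)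

theorem iUnion_natCast_image_Ico {N k : ℕ} [NeZero N] {b : ℕ → ℕ} (hb0 : b 0 = 0)
    (hbk : b k = N) :
    ⋃ i : Fin k, (Nat.cast '' Set.Ico (b i) (b (i + 1)) : Set (ZMod N)) = Set.univ := by
  refine Set.eq_univ_of_forall fun x => ?_
  have hx : x.val ∈ Set.Ico (b 0) (b k) := by
    rw [hb0, hbk]
    exact ⟨Nat.zero_le _, ZMod.val_lt x⟩
  obtain ⟨i, hi, hxi⟩ := Set.mem_iUnion₂.mp (Ico_subset_biUnion_Ico k b hx)
  exact Set.mem_iUnion.mpr ⟨⟨i, mem_range.mp hi⟩, x.val, hxi, ZMod.natCast_zmod_val x⟩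

theorem exists_isWedgePartition_arc {N k : ℕ} [NeZero N] (r : ℕ) (hk : 0 < k) (hkN : k ≤ N) :
    ∃ S : Fin k → Set (ZMod N × Fin r), IsWedgePartition N r k S ∧
      ∀ i, ∃ a c, N / k ≤ c ∧ c ≤ N ∧ S i = arc a c ×ˢ Set.univ := by
  set b : ℕ → ℕ := fun i => i * N / k
  have hb : Monotone b := fun i j h => Nat.div_le_div_right (Nat.mul_le_mul_right N h)
  have hbk : b k = N := Nat.mul_div_cancel_left N hk
  have hgap : ∀ i, N / k ≤ b (i + 1) - b i := fun i => by
    have : i * N / k + N / k ≤ (i * N + N) / k := Nat.div_add_div_le_add_div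
    simp only [b, add_mul, one_mul]
    omega
  have hle : ∀ i : Fin k, b (i + 1) ≤ N := fun i => hbk ▸ hb (Nat.succ_le_of_lt i.isLt)
  have hA : ∀ i : Fin k,
      arc (b i : ZMod N) (b (i + 1) - b i) = Nat.cast '' Set.Ico (b i) (b (i + 1)) :=
    fun i => arc_natCast_eq_image_Ico N (hb (Nat.le_succ _))
  refine ⟨fun i => arc (b i : ZMod N) (b (i + 1) - b i) ×ˢ Set.univ,
    ⟨fun i => arc (b i : ZMod N) (b (i + 1) - b i), fun i => ?_, ?_, ?_, fun i => rfl⟩,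
    fun i => ⟨_, _, hgap i, by have := hle i; omega, rfl⟩⟩
  · exact ⟨_, (Nat.div_pos hkN hk).trans_le (hgap i), _, rfl⟩
  · simp only [hA]
    exact pairwise_disjoint_natCast_image_Ico hb hbk
  · simp only [hA]
    exact iUnion_natCast_image_Ico (by simp [b]) hbk

theorem cut_div_volume_arc_prod_univ_le {N r q c : ℕ} [NeZero N] (hN : 3 ≤ N) (hr : 1 ≤ r)
    (a : ZMod N) (hq : 0 < q) (hqc : q ≤ c) (hcN : c ≤ N) :
    (cut (spiderWeb N r) (arc a c ×ˢ Set.univ) : ℝ) /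
        (volume (spiderWeb N r) (arc a c ×ˢ Set.univ) : ℝ) ≤
      (r : ℝ) / ((q : ℝ) * (2 * (r : ℝ) - 1)) := by
  have hcut : (cut (spiderWeb N r) (arc a c ×ˢ Set.univ) : ℝ) ≤ 2 * r := by
    exact_mod_cast cut_spiderWeb_arc_prod_univ_le a c
  have hvol : (volume (spiderWeb N r) (arc a c ×ˢ Set.univ) : ℝ) = 2 * c * (2 * r - 1) := by
    rw [volume_spiderWeb_prod_univ hN, ncard_arc a hcN]
    push_cast [Nat.cast_sub hr]
    ring
  have hr' : (1 : ℝ) ≤ r := by exact_mod_cast hr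
  have hqc' : (q : ℝ) ≤ c := by exact_mod_cast hqc
  have hq' : (0 : ℝ) < q := by exact_mod_cast hq
  have hc' : (0 : ℝ) < c := hq'.trans_le hqc'
  have h2r : (0 : ℝ) < 2 * r - 1 := by linarith
  rw [hvol, div_le_div_iff₀ (by positivity) (by positivity)]
  calc (cut (spiderWeb N r) (arc a c ×ˢ Set.univ) : ℝ) * (q * (2 * r - 1))
      ≤ 2 * r * (c * (2 * r - 1)) := by gcongr
    _ = r * (2 * c * (2 * r - 1)) := by ring

theorem wedgeCheeger_le_of_isWedgePartition {N r k : ℕ} (hk : 0 < k)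
    {S : Fin k → Set (ZMod N × Fin r)} (hS : IsWedgePartition N r k S) {x : ℝ}
    (hx : ∀ i, (cut (spiderWeb N r) (S i) : ℝ) / (volume (spiderWeb N r) (S i) : ℝ) ≤ x) :
    wedgeCheeger N r k ≤ x := by
  have : Nonempty (Fin k) := ⟨⟨0, hk⟩⟩
  refine csInf_le_of_le ⟨0, ?_⟩ ⟨S, hS, rfl⟩ (ciSup_le hx)
  rintro _ ⟨S', -, rfl⟩
  exact Real.iSup_nonneg fun i => by positivity

/-- For `N ≥ 3`, `r ≥ 2` and `2 ≤ k ≤ N`, there is a wedge partition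
`S 1, ..., S k` of the spider web graph `G_{N,r}` with
`max_i Cut(S i)/Volume(S i) ≤ r/(⌊N/k⌋(2r − 1))`; consequently the wedge Cheeger constant
satisfies `φ_{N,r}(k) ≤ r/(⌊N/k⌋(2r − 1))` (`⌊N/k⌋` is integer division). -/
theorem wedgeCheeger_le (N r k : ℕ) (hN : 3 ≤ N) (hr : 2 ≤ r) (hk : 2 ≤ k) (hkN : k ≤ N) :
    (∃ S : Fin k → Set (ZMod N × Fin r), IsWedgePartition N r k S ∧
      ∀ i, (cut (spiderWeb N r) (S i) : ℝ) / (volume (spiderWeb N r) (S i) : ℝ)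
        ≤ (r : ℝ) / (((N / k : ℕ) : ℝ) * (2 * (r : ℝ) - 1))) ∧
    wedgeCheeger N r k ≤ (r : ℝ) / (((N / k : ℕ) : ℝ) * (2 * (r : ℝ) - 1)) := by
  have : NeZero N := ⟨by omega⟩
  obtain ⟨S, hS, harc⟩ := exists_isWedgePartition_arc r (by omega : 0 < k) hkN
  have hbound : ∀ i, (cut (spiderWeb N r) (S i) : ℝ) / (volume (spiderWeb N r) (S i) : ℝ)
      ≤ (r : ℝ) / (((N / k : ℕ) : ℝ) * (2 * (r : ℝ) - 1)) := fun i => by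
    obtain ⟨a, c, hqc, hcN, hSi⟩ := harc i
    rw [hSi]
    exact cut_div_volume_arc_prod_univ_le hN (by omega) a (Nat.div_pos hkN (by omega)) hqc hcN
  exact ⟨⟨S, hS, hbound⟩, wedgeCheeger_le_of_isWedgePartition (by omega) hS hbound⟩
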